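/- arXiv:1612.07915 — 6 statements merged into one kernel-verified Lean document; each statement's English description precedes it below -/
import Mathlib

section
/- Let P be a nonempty polyhedral set in ℝ^d. Then Σ_{F face of P} 1_{relint F + N(P,F)} = 1 everywhere on ℝ^d; that is, the sets relint F + N(P,F), for F ranging over the nonempty faces of P, form a partition of ℝ^d. -/
open RealInnerProductSpace Pointwise

noncomputable section

abbrev Euc (d : ℕ) := EuclideanSpace ℝ (Fin d)

/-- A polyhedral set: intersection of finitely many closed half-spaces. -/
def IsPolyhedral {d : ℕ} (P : Set (Euc d)) : Prop :=
  ∃ s : Finset (Euc d × ℝ), P = {x | ∀ h ∈ s, ⟪h.1, x⟫ ≤ h.2}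

/-- A (nonempty) face of a convex set: a nonempty convex extreme subset. -/
def IsFaceOf {d : ℕ} (P F : Set (Euc d)) : Prop :=
  F.Nonempty ∧ Convex ℝ F ∧ IsExtreme ℝ P F

/-- The normal cone of `P` at the face `F`. -/
def normalCone {d : ℕ} (P F : Set (Euc d)) : Set (Euc d) :=
  {u | ∀ f ∈ F, ∀ z ∈ P, ⟪u, z - f⟫ ≤ 0}

/-- The dimension of a set: the rank of the direction of its affine hull. -/
def sdim {d : ℕ} (F : Set (Euc d)) : ℕ :=
  Module.finrank ℝ (affineSpan ℝ F).direction

/-- φ_P(x) = Σ_{F face of P} (-1)^{dim F} 1_{F - N(P,F)}(x). -/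
def phi {d : ℕ} (P : Set (Euc d)) (x : Euc d) : ℤ :=
  ∑ᶠ F ∈ {F : Set (Euc d) | IsFaceOf P F},
    (-1 : ℤ) ^ sdim F * (F - normalCone P F).indicator (fun _ => (1 : ℤ)) x

/-- A set is line-free if it contains no affine line. -/
def LineFree {d : ℕ} (P : Set (Euc d)) : Prop :=
  ∀ x y : Euc d, y ≠ 0 → ∃ t : ℝ, x + t • y ∉ P


/-!
Let `y` be the nearest point of `P` to `x`, so that `x - y` is normal to `P` at `y`. The points
`z ∈ P` such that the segment from `z` through `y` can be prolonged beyond `y` inside `P` form the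
face `F₀` of `P` with `y` in its relative interior, and `N(P, F₀)` is the normal cone at the point
`y`; hence `x = y + (x - y) ∈ relint F₀ + N(P, F₀)`. Conversely, if `x = f + u` with
`f ∈ relint F` and `u ∈ N(P, F)`, then `x - f` is normal to `P` at `f`, which characterises the
nearest point, so `f = y`; and a face is determined by any point of its relative interior, so
`F = F₀`.
-/

open Filter Topology

theorem mem_intrinsicInterior_iff_eventually {𝕜 V P : Type*} [Ring 𝕜] [AddCommGroup V]
    [Module 𝕜 V] [TopologicalSpace P] [AddTorsor V P] {C : Set P} {y : P} :
    y ∈ intrinsicInterior 𝕜 C ↔ y ∈ affineSpan 𝕜 C ∧ ∀ᶠ p in 𝓝[affineSpan 𝕜 C] y, p ∈ C := by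
  simp only [mem_intrinsicInterior, mem_interior_iff_mem_nhds]
  constructor
  · rintro ⟨y, hy, rfl⟩
    rw [mem_nhds_subtype_iff_nhdsWithin] at hy
    exact ⟨y.2, mem_of_superset hy (Set.image_preimage_subset _ _)⟩
  · rintro ⟨hyA, hC⟩
    refine ⟨⟨y, hyA⟩, ?_, rfl⟩
    rw [mem_nhds_subtype_iff_nhdsWithin]
    filter_upwards [hC, self_mem_nhdsWithin] with p hpC hpA using ⟨⟨p, hpA⟩, hpC, rfl⟩

theorem AffineSubspace.add_smul_sub_mem {E : Type*} [AddCommGroup E] [Module ℝ E]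
    (s : AffineSubspace ℝ E) (c : ℝ) {x y z : E} (hx : x ∈ s) (hy : y ∈ s) (hz : z ∈ s) :
    z + c • (x - y) ∈ s := by
  simpa [vsub_eq_sub, vadd_eq_add, add_comm] using s.smul_vsub_vadd_mem c hx hy hz

section TopologicalVectorSpace

variable {E : Type*} [AddCommGroup E] [Module ℝ E] [TopologicalSpace E]
  [IsTopologicalAddGroup E] [ContinuousSMul ℝ E] {C : Set E} {x y z : E}

theorem exists_pos_add_smul_sub_mem_of_mem_intrinsicInterior (hy : y ∈ intrinsicInterior ℝ C)
    (hz : z ∈ C) : ∃ ε : ℝ, 0 < ε ∧ y + ε • (y - z) ∈ C := by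
  obtain ⟨hyA, hC⟩ := mem_intrinsicInterior_iff_eventually.1 hy
  have hzA : z ∈ affineSpan ℝ C := subset_affineSpan ℝ C hz
  have hlim : Tendsto (fun t : ℝ => y + t • (y - z)) (𝓝 0) (𝓝[affineSpan ℝ C] y) := by
    refine tendsto_nhdsWithin_iff.2 ⟨?_, Eventually.of_forall fun t =>
      (affineSpan ℝ C).add_smul_sub_mem t hyA hzA hyA⟩
    simpa using ((continuous_id.smul continuous_const).const_add y).tendsto (0 : ℝ)
  obtain ⟨ε, hεC, hε⟩ :=
    ((hlim.eventually hC).filter_mono nhdsWithin_le_nhds |>.and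
      (self_mem_nhdsWithin (s := Set.Ioi (0 : ℝ)))).exists
  exact ⟨ε, hε, hεC⟩

theorem Convex.add_smul_sub_mem_intrinsicInterior (hC : Convex ℝ C) (hx : x ∈ C)
    (hy : y ∈ intrinsicInterior ℝ C) {t : ℝ} (ht : t ∈ Set.Ioc (0 : ℝ) 1) :
    x + t • (y - x) ∈ intrinsicInterior ℝ C := by
  obtain ⟨hyA, hC'⟩ := mem_intrinsicInterior_iff_eventually.1 hy
  set p := x + t • (y - x) with hp
  have hxA : x ∈ affineSpan ℝ C := subset_affineSpan ℝ C hx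
  have hpA : p ∈ affineSpan ℝ C := (affineSpan ℝ C).add_smul_sub_mem t hyA hxA hxA
  -- `g` undoes the homothety with centre `x` and ratio `t`, sending `p` back to `y`.
  set g : E → E := fun q => y + t⁻¹ • (q - p)
  have hlim : Tendsto g (𝓝[affineSpan ℝ C] p) (𝓝[affineSpan ℝ C] y) := by
    refine tendsto_nhdsWithin_iff.2 ⟨?_, eventually_nhdsWithin_of_forall fun q hq =>
      (affineSpan ℝ C).add_smul_sub_mem t⁻¹ hq hpA hyA⟩
    refine (Continuous.tendsto ?_ p).mono_left nhdsWithin_le_nhds |>.trans_eq ?_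
    · fun_prop
    · simp [g]
  refine mem_intrinsicInterior_iff_eventually.2 ⟨hpA, ?_⟩
  filter_upwards [hlim.eventually hC'] with q hq
  have hq_eq : x + t • (g q - x) = q := by
    rw [add_sub_right_comm, smul_add, smul_smul, mul_inv_cancel₀ ht.1.ne', one_smul, hp]
    abel
  exact hq_eq ▸ hC.add_smul_sub_mem hx hq ⟨ht.1.le, ht.2⟩

end TopologicalVectorSpace

section MinimalFace

variable {E : Type*} [AddCommGroup E] [Module ℝ E] {P : Set E} {y z : E}

def minimalFace (P : Set E) (y : E) : Set E :=
  {z | z ∈ P ∧ ∃ ε : ℝ, 0 < ε ∧ y + ε • (y - z) ∈ P}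

theorem self_mem_minimalFace (hy : y ∈ P) : y ∈ minimalFace P y :=
  ⟨hy, 1, one_pos, by simpa using hy⟩

theorem minimalFace_subset : minimalFace P y ⊆ P := fun _ hz => hz.1

theorem add_smul_sub_mem_minimalFace (hz : z ∈ P) {ε : ℝ} (hε : 0 < ε)
    (h : y + ε • (y - z) ∈ P) : y + ε • (y - z) ∈ minimalFace P y := by
  refine ⟨h, ε⁻¹, inv_pos.2 hε, ?_⟩
  rwa [sub_add_cancel_left, smul_neg, smul_smul, inv_mul_cancel₀ hε.ne', one_smul, neg_sub,
    add_sub_cancel]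

theorem Convex.add_smul_sub_mem_of_le (hP : Convex ℝ P) (hy : y ∈ P) {ε ε' : ℝ} (hε' : 0 ≤ ε')
    (hle : ε' ≤ ε) (h : y + ε • (y - z) ∈ P) : y + ε' • (y - z) ∈ P := by
  rcases hε'.eq_or_lt with rfl | hε'
  · simpa using hy
  have hε : 0 < ε := hε'.trans_le hle
  have := hP.add_smul_sub_mem hy h ⟨by positivity, (div_le_one hε).2 hle⟩
  rwa [add_sub_cancel_left, smul_smul, div_mul_cancel₀ _ hε.ne'] at this

protected theorem Convex.minimalFace (hP : Convex ℝ P) (hy : y ∈ P) :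
    Convex ℝ (minimalFace P y) := by
  rintro z₁ ⟨hz₁, ε₁, hε₁, h₁⟩ z₂ ⟨hz₂, ε₂, hε₂, h₂⟩ a b ha hb hab
  have hε : 0 < min ε₁ ε₂ := lt_min hε₁ hε₂
  refine ⟨hP hz₁ hz₂ ha hb hab, min ε₁ ε₂, hε, ?_⟩
  have key : y + min ε₁ ε₂ • (y - (a • z₁ + b • z₂)) =
      a • (y + min ε₁ ε₂ • (y - z₁)) + b • (y + min ε₁ ε₂ • (y - z₂)) := by
    obtain rfl : b = 1 - a := by linarith
    module
  rw [key]
  exact hP (hP.add_smul_sub_mem_of_le hy hε.le (min_le_left _ _) h₁)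
    (hP.add_smul_sub_mem_of_le hy hε.le (min_le_right _ _) h₂) ha hb hab

theorem Convex.isExtreme_minimalFace (hP : Convex ℝ P) : IsExtreme ℝ P (minimalFace P y) := by
  refine ⟨minimalFace_subset, ?_⟩
  rintro x₁ hx₁ x₂ hx₂ x ⟨-, ε, hε, hxε⟩ ⟨a, b, ha, hb, hab, rfl⟩
  obtain rfl : b = 1 - a := by linarith
  -- Prolonging the segment from `x₁` through `y` is a positive combination of prolonging
  -- the one from `x` and of moving towards `x₂`.
  have hs : 0 < 1 + ε * (1 - a) := by nlinarith
  refine ⟨hx₁, ε * a / (1 + ε * (1 - a)), by positivity, ?_⟩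
  have key : y + (ε * a / (1 + ε * (1 - a))) • (y - x₁) =
      (1 / (1 + ε * (1 - a))) • (y + ε • (y - (a • x₁ + (1 - a) • x₂))) +
        (ε * (1 - a) / (1 + ε * (1 - a))) • x₂ := by
    match_scalars <;> field_simp <;> ring
  rw [key]
  exact hP hxε hx₂ (by positivity) (div_nonneg (mul_nonneg hε.le hb.le) hs.le) (by field_simp)

end MinimalFace

theorem IsExtreme.eq_minimalFace_of_mem_intrinsicInterior {E : Type*} [AddCommGroup E]
    [Module ℝ E] [TopologicalSpace E] [IsTopologicalAddGroup E] [ContinuousSMul ℝ E]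
    {P F : Set E} {y : E} (hF : IsExtreme ℝ P F) (hy : y ∈ intrinsicInterior ℝ F) :
    F = minimalFace P y := by
  refine Set.Subset.antisymm (fun z hz => ?_) ?_
  · obtain ⟨ε, hε, h⟩ := exists_pos_add_smul_sub_mem_of_mem_intrinsicInterior hy hz
    exact ⟨hF.1 hz, ε, hε, hF.1 h⟩
  · rintro z ⟨hzP, ε, hε, h⟩
    refine hF.2 hzP h (intrinsicInterior_subset hy) ⟨ε / (1 + ε), 1 / (1 + ε), by positivity,
      by positivity, by field_simp; ring, ?_⟩
    match_scalars
    · ring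
    · field_simp

theorem Convex.mem_intrinsicInterior_minimalFace {E : Type*} [NormedAddCommGroup E]
    [NormedSpace ℝ E] [FiniteDimensional ℝ E] {P : Set E} {y : E} (hP : Convex ℝ P)
    (hy : y ∈ P) : y ∈ intrinsicInterior ℝ (minimalFace P y) := by
  have hF := hP.minimalFace hy
  obtain ⟨w, hw⟩ := Set.Nonempty.intrinsicInterior hF ⟨y, self_mem_minimalFace hy⟩
  obtain ⟨hwP, ε, hε, h⟩ := intrinsicInterior_subset hw
  -- `y` lies strictly between the relative interior point `w` and a point of the face.
  have key : y + ε • (y - w) + (ε / (1 + ε)) • (w - (y + ε • (y - w))) = y := by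
    match_scalars <;> field_simp <;> ring
  have := hF.add_smul_sub_mem_intrinsicInterior (add_smul_sub_mem_minimalFace hwP hε h) hw
    (t := ε / (1 + ε)) ⟨by positivity, (div_le_one (by positivity)).2 (by linarith)⟩
  rwa [key] at this

section NormalCone

variable {d : ℕ} {P F G : Set (Euc d)} {u x y f : Euc d}

theorem mem_normalCone_singleton : u ∈ normalCone P {y} ↔ ∀ z ∈ P, ⟪u, z - y⟫ ≤ 0 := by
  simp [normalCone]

theorem normalCone_anti (h : F ⊆ G) : normalCone P G ⊆ normalCone P F :=
  fun _ hu f hf => hu f (h hf)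

theorem normalCone_minimalFace (hy : y ∈ P) :
    normalCone P (minimalFace P y) = normalCone P {y} := by
  refine (normalCone_anti (Set.singleton_subset_iff.2 (self_mem_minimalFace hy))).antisymm ?_
  rintro u hu f ⟨-, ε, hε, h⟩ z hz
  rw [mem_normalCone_singleton] at hu
  have hf : ε * ⟪u, y - f⟫ ≤ 0 := by
    simpa [real_inner_smul_right] using hu _ h
  have hz := hu z hz
  calc ⟪u, z - f⟫ = ⟪u, z - y⟫ + ⟪u, y - f⟫ := by rw [← inner_add_right, sub_add_sub_cancel]
    _ ≤ 0 := by nlinarith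

theorem IsPolyhedral.convex (hP : IsPolyhedral P) : Convex ℝ P := by
  obtain ⟨s, rfl⟩ := hP
  simp only [Set.ofPred_forall]
  exact convex_iInter₂ fun h _ => convex_halfSpace_le (innerₛₗ ℝ h.1).isLinear h.2

theorem IsPolyhedral.isClosed (hP : IsPolyhedral P) : IsClosed P := by
  obtain ⟨s, rfl⟩ := hP
  simp only [Set.ofPred_forall]
  exact isClosed_biInter fun h _ => isClosed_le (continuous_const.inner continuous_id)
    continuous_const

theorem exists_sub_mem_normalCone_singleton (hPc : IsClosed P) (hP : Convex ℝ P)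
    (hne : P.Nonempty) (x : Euc d) : ∃ y ∈ P, x - y ∈ normalCone P {y} := by
  obtain ⟨y, hy, hmin⟩ := exists_norm_eq_iInf_of_complete_convex hne hPc.isComplete hP x
  exact ⟨y, hy, mem_normalCone_singleton.2 ((norm_eq_iInf_iff_real_inner_le_zero hP hy).1 hmin)⟩

theorem eq_of_sub_mem_normalCone_singleton (hy : y ∈ P) (hf : f ∈ P)
    (hxy : x - y ∈ normalCone P {y}) (hxf : x - f ∈ normalCone P {f}) : y = f := by
  have h₁ := mem_normalCone_singleton.1 hxy f hf
  have h₂ := mem_normalCone_singleton.1 hxf y hy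
  have : ‖y - f‖ ^ 2 ≤ 0 := calc
    ‖y - f‖ ^ 2 = ⟪x - f, y - f⟫ + ⟪x - y, f - y⟫ := by
      rw [← real_inner_self_eq_norm_sq, ← neg_sub y f, inner_neg_right, ← sub_eq_add_neg,
        ← inner_sub_left, sub_sub_sub_cancel_left]
    _ ≤ 0 := add_nonpos h₂ h₁
  exact sub_eq_zero.1 (norm_eq_zero.1 (by nlinarith [norm_nonneg (y - f)]))

theorem Convex.isFaceOf_minimalFace (hP : Convex ℝ P) (hy : y ∈ P) :
    IsFaceOf P (minimalFace P y) :=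
  ⟨⟨y, self_mem_minimalFace hy⟩, hP.minimalFace hy, hP.isExtreme_minimalFace⟩

theorem Convex.mem_intrinsicInterior_add_normalCone_iff (hP : Convex ℝ P)
    (hF : IsExtreme ℝ P F) (hy : y ∈ P) (hxy : x - y ∈ normalCone P {y}) :
    x ∈ intrinsicInterior ℝ F + normalCone P F ↔ F = minimalFace P y := by
  constructor
  · rintro ⟨f, hf, u, hu, rfl⟩
    have hfF : f ∈ F := intrinsicInterior_subset hf
    have hxf : f + u - f ∈ normalCone P {f} := by
      rw [add_sub_cancel_left]
      exact normalCone_anti (Set.singleton_subset_iff.2 hfF) hu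
    obtain rfl := eq_of_sub_mem_normalCone_singleton hy (hF.1 hfF) hxy hxf
    exact hF.eq_minimalFace_of_mem_intrinsicInterior hf
  · rintro rfl
    refine ⟨y, hP.mem_intrinsicInterior_minimalFace hy, x - y, ?_, add_sub_cancel y x⟩
    rwa [normalCone_minimalFace hy]

end NormalCone

theorem relint_plus_normalCone_partition {d : ℕ} (P : Set (Euc d))
    (hP : IsPolyhedral P) (hne : P.Nonempty) :
    ∀ x : Euc d,
      ∑ᶠ F ∈ {F : Set (Euc d) | IsFaceOf P F},
        (intrinsicInterior ℝ F + normalCone P F).indicator (fun _ => (1 : ℤ)) x = 1 := by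
  intro x
  obtain ⟨y, hy, hxy⟩ := exists_sub_mem_normalCone_singleton hP.isClosed hP.convex hne x
  have hface := hP.convex.isFaceOf_minimalFace hy
  have hmem := fun F (hF : IsFaceOf P F) =>
    hP.convex.mem_intrinsicInterior_add_normalCone_iff hF.2.2 hy hxy
  rw [finsum_mem_inter_support_eq' _ _ {minimalFace P y}, finsum_mem_singleton,
    Set.indicator_of_mem ((hmem _ hface).2 rfl)]
  intro F hF
  rw [Function.mem_support, Set.indicator_apply_ne_zero] at hF
  exact ⟨fun hF' => (hmem F hF').1 hF.1, by rintro rfl; exact hface⟩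
end
end

section
/- Let P be a nonempty polyhedral set in ℝ^d, x ∈ ℝ^d, and suppose (G_1,H_1) and (G_2,H_2) are two distinct pairs of nonempty faces with G_i ⊆ H_i, G_i ≠ H_i, and x ∈ relint G_i - relint N(P,H_i) for i = 1,2. Then the face intervals I(G_1,H_1) = {F face : G_1 ⊆ F ⊆ H_1} and I(G_2,H_2) are disjoint. -/
open RealInnerProductSpace Pointwise

noncomputable section

open Topology

/-!
If a face `F` lies in both intervals, write `x = gᵢ - uᵢ`. Then `gᵢ ∈ F` and, the normal cone being
antitone, `uᵢ ∈ N(P,F)`; so `‖g₁ - g₂‖² = ⟪u₁ - u₂, g₁ - g₂⟫ ≤ 0`, whence `g₁ = g₂` and `u₁ = u₂`.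
A face is determined by any point of its relative interior (it is an extreme set), and, for a
polyhedron, by any point of the relative interior of its normal cone (every face is exposed by a
normal vector, and a relative-interior normal is a proper convex combination of that one and another
normal). Hence `(G₁, H₁) = (G₂, H₂)`.
-/

theorem mem_openSegment_add_smul_sub {E : Type*} [AddCommGroup E] [Module ℝ E] (x y : E) {t : ℝ}
    (ht : 0 < t) : x ∈ openSegment ℝ y (x + t • (x - y)) := by
  refine ⟨t / (1 + t), 1 / (1 + t), by positivity, by positivity, by field_simp; ring, ?_⟩
  have : (1 : ℝ) + t ≠ 0 := by positivity
  match_scalars <;> field_simp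
  ring

theorem exists_mem_openSegment_of_mem_intrinsicInterior {E : Type*} [NormedAddCommGroup E]
    [NormedSpace ℝ E] {C : Set E} {c y : E} (hc : c ∈ intrinsicInterior ℝ C) (hy : y ∈ C) :
    ∃ z ∈ C, c ∈ openSegment ℝ y z := by
  obtain ⟨c', hc', rfl⟩ := mem_intrinsicInterior.mp hc
  have hmem (t : ℝ) : (c' : E) + t • (c' - y) ∈ affineSpan ℝ C :=
    add_comm (t • ((c' : E) - y)) c' ▸
      (affineSpan ℝ C).smul_vsub_vadd_mem t c'.2 (subset_affineSpan ℝ C hy) c'.2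
  let γ : ℝ → affineSpan ℝ C := fun t ↦ ⟨c' + t • (c' - y), hmem t⟩
  have hγ0 : γ 0 = c' := by ext; simp [γ]
  have hnear : ∀ᶠ t in 𝓝 0, γ t ∈ interior ((↑) ⁻¹' C) :=
    (by fun_prop : Continuous γ).continuousAt.preimage_mem_nhds
      (hγ0 ▸ isOpen_interior.mem_nhds hc')
  obtain ⟨t, ht, htC⟩ := hnear.exists_gt
  exact ⟨γ t, (interior_subset htC : γ t ∈ (↑) ⁻¹' C), mem_openSegment_add_smul_sub _ _ ht⟩

theorem IsExtreme.subset_of_mem_intrinsicInterior {E : Type*} [NormedAddCommGroup E]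
    [NormedSpace ℝ E] {A B F : Set E} {c : E} (hB : IsExtreme ℝ A B) (hFA : F ⊆ A)
    (hc : c ∈ intrinsicInterior ℝ F) (hcB : c ∈ B) : F ⊆ B := by
  intro y hy
  obtain ⟨z, hz, hcyz⟩ := exists_mem_openSegment_of_mem_intrinsicInterior hc hy
  exact hB.left_mem_of_mem_openSegment (hFA hy) (hFA hz) hcB hcyz

theorem IsFaceOf.eq_of_mem_intrinsicInterior {d : ℕ} {P F₁ F₂ : Set (Euc d)} {c : Euc d}
    (hF₁ : IsFaceOf P F₁) (hF₂ : IsFaceOf P F₂) (hc₁ : c ∈ intrinsicInterior ℝ F₁)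
    (hc₂ : c ∈ intrinsicInterior ℝ F₂) : F₁ = F₂ :=
  (hF₂.2.2.subset_of_mem_intrinsicInterior hF₁.2.2.1 hc₁ (intrinsicInterior_subset hc₂)).antisymm
    (hF₁.2.2.subset_of_mem_intrinsicInterior hF₂.2.2.1 hc₂ (intrinsicInterior_subset hc₁))

theorem inner_eq_of_mem_intrinsicInterior {E : Type*} [NormedAddCommGroup E]
    [InnerProductSpace ℝ E] {F : Set E} {a c y : E} {b : ℝ} (hle : ∀ x ∈ F, ⟪a, x⟫ ≤ b)
    (hc : c ∈ intrinsicInterior ℝ F) (hcb : ⟪a, c⟫ = b) (hy : y ∈ F) : ⟪a, y⟫ = b := by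
  obtain ⟨z, hz, s, t, hs, ht, hst, rfl⟩ := exists_mem_openSegment_of_mem_intrinsicInterior hc hy
  rw [inner_add_right, real_inner_smul_right, real_inner_smul_right] at hcb
  refine le_antisymm (hle y hy) (le_of_not_gt fun hlt ↦ ?_)
  have hsb : s * b + t * b = b := by rw [← add_mul, hst, one_mul]
  linarith [mul_le_mul_of_nonneg_left (hle z hz) ht.le, mul_lt_mul_of_pos_left hlt hs]

section Polyhedron

variable {E : Type*} [NormedAddCommGroup E] [InnerProductSpace ℝ E]

def activeSet (s : Finset (E × ℝ)) (c : E) : Finset (E × ℝ) :=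
  {h ∈ s | ⟪h.1, c⟫ = h.2}

variable {s : Finset (E × ℝ)}

theorem mem_activeSet {c : E} {h : E × ℝ} : h ∈ activeSet s c ↔ h ∈ s ∧ ⟪h.1, c⟫ = h.2 :=
  Finset.mem_filter

theorem exists_pos_add_smul_sub_mem {c z : E} (hc : ∀ h ∈ s, ⟪h.1, c⟫ ≤ h.2)
    (hact : activeSet s c ⊆ activeSet s z) :
    ∃ t > (0 : ℝ), ∀ h ∈ s, ⟪h.1, c + t • (c - z)⟫ ≤ h.2 := by
  have hnear : ∀ᶠ t in 𝓝 (0 : ℝ), ∀ h ∈ s, ⟪h.1, c + t • (c - z)⟫ ≤ h.2 := by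
    rw [Filter.eventually_all_finset]
    intro h hh
    rcases (hc h hh).eq_or_lt with hcb | hcb
    · have hzb := (mem_activeSet.mp (hact (mem_activeSet.mpr ⟨hh, hcb⟩))).2
      refine Filter.Eventually.of_forall fun t ↦ le_of_eq ?_
      rw [inner_add_right, real_inner_smul_right, inner_sub_right, hcb, hzb]
      ring
    · have hcont : Continuous fun t : ℝ ↦ ⟪h.1, c + t • (c - z)⟫ := by fun_prop
      exact (hcont.continuousAt.eventually_lt continuousAt_const (by simpa using hcb)).mono
        fun _ ↦ le_of_lt
  exact hnear.exists_gt

theorem IsExtreme.mem_of_activeSet_subset {F : Set E} {c z : E}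
    (hF : IsExtreme ℝ {x | ∀ h ∈ s, ⟪h.1, x⟫ ≤ h.2} F) (hc : c ∈ F)
    (hz : ∀ h ∈ s, ⟪h.1, z⟫ ≤ h.2) (hact : activeSet s c ⊆ activeSet s z) : z ∈ F := by
  obtain ⟨t, ht, hout⟩ := exists_pos_add_smul_sub_mem (hF.1 hc) hact
  exact hF.left_mem_of_mem_openSegment hz hout hc (mem_openSegment_add_smul_sub c z ht)

theorem activeSet_subset_of_mem_intrinsicInterior {F : Set E} {c y : E}
    (hF : F ⊆ {x | ∀ h ∈ s, ⟪h.1, x⟫ ≤ h.2}) (hc : c ∈ intrinsicInterior ℝ F) (hy : y ∈ F) :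
    activeSet s c ⊆ activeSet s y := fun h hh ↦ by
  obtain ⟨hs, hcb⟩ := mem_activeSet.mp hh
  exact mem_activeSet.mpr ⟨hs, inner_eq_of_mem_intrinsicInterior (fun x hx ↦ hF hx h hs) hc hcb hy⟩

theorem inner_sum_activeSet_sub {c f : E} (hact : activeSet s c ⊆ activeSet s f) (z : E) :
    ⟪∑ h ∈ activeSet s c, h.1, z - f⟫ = ∑ h ∈ activeSet s c, (⟪h.1, z⟫ - h.2) := by
  rw [sum_inner]
  refine Finset.sum_congr rfl fun h hh ↦ ?_
  rw [inner_sub_right, (mem_activeSet.mp (hact hh)).2]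

end Polyhedron

theorem normalCone_anti_s7 {d : ℕ} (P : Set (Euc d)) {H H' : Set (Euc d)} (h : H ⊆ H') :
    normalCone P H' ⊆ normalCone P H :=
  fun _ hu f hf ↦ hu f (h hf)

theorem eq_of_sub_eq_sub_of_mem_normalCone {d : ℕ} {P F : Set (Euc d)} (hFP : F ⊆ P)
    {g₁ g₂ u₁ u₂ : Euc d} (hg₁ : g₁ ∈ F) (hg₂ : g₂ ∈ F) (hu₁ : u₁ ∈ normalCone P F)
    (hu₂ : u₂ ∈ normalCone P F) (h : g₁ - u₁ = g₂ - u₂) : g₁ = g₂ := by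
  have hgu : g₁ - g₂ = u₁ - u₂ := by rw [sub_eq_sub_iff_sub_eq_sub.mp h]
  have hnonpos : ⟪g₁ - g₂, g₁ - g₂⟫ ≤ 0 := by
    calc ⟪g₁ - g₂, g₁ - g₂⟫ = ⟪u₁, g₁ - g₂⟫ + ⟪u₂, g₂ - g₁⟫ := by
          rw [congrArg (⟪·, g₁ - g₂⟫) hgu, inner_sub_left, ← neg_sub g₁ g₂, inner_neg_right]; ring
      _ ≤ 0 := add_nonpos (hu₁ g₂ hg₂ g₁ (hFP hg₁)) (hu₂ g₁ hg₁ g₂ (hFP hg₂))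
  exact sub_eq_zero.mp (real_inner_self_nonpos.mp hnonpos)

theorem IsPolyhedral.exists_exposing_normal {d : ℕ} {P F : Set (Euc d)} (hP : IsPolyhedral P)
    (hF : IsFaceOf P F) :
    ∃ v ∈ normalCone P F, ∀ z ∈ P, z ∉ F → ∀ f ∈ F, ⟪v, z - f⟫ < 0 := by
  obtain ⟨s, rfl⟩ := hP
  obtain ⟨c, hc⟩ := hF.1.intrinsicInterior hF.2.1
  have hact (f : Euc d) (hf : f ∈ F) : activeSet s c ⊆ activeSet s f :=
    activeSet_subset_of_mem_intrinsicInterior hF.2.2.1 hc hf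
  have hterm {z : Euc d} (hz : ∀ h ∈ s, ⟪h.1, z⟫ ≤ h.2) (h : Euc d × ℝ) (hh : h ∈ activeSet s c) :
      ⟪h.1, z⟫ - h.2 ≤ 0 :=
    sub_nonpos.mpr (hz h (mem_activeSet.mp hh).1)
  refine ⟨∑ h ∈ activeSet s c, h.1, fun f hf z hz ↦ ?_, fun z hz hzF f hf ↦ ?_⟩
  · rw [inner_sum_activeSet_sub (hact f hf)]
    exact Finset.sum_nonpos (hterm hz)
  · rw [inner_sum_activeSet_sub (hact f hf)]
    obtain ⟨h, hhc, hhz⟩ := Finset.not_subset.mp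
      (mt (hF.2.2.mem_of_activeSet_subset (intrinsicInterior_subset hc) hz) hzF)
    refine Finset.sum_neg' (hterm hz) ⟨h, hhc, ?_⟩
    exact sub_neg.mpr ((hz h (mem_activeSet.mp hhc).1).lt_of_ne
      fun hzb ↦ hhz (mem_activeSet.mpr ⟨(mem_activeSet.mp hhc).1, hzb⟩))

theorem subset_of_mem_intrinsicInterior_normalCone {d : ℕ} {P A B : Set (Euc d)} {u v : Euc d}
    (hAP : A ⊆ P) (hBP : B ⊆ P) (hB : B.Nonempty) (hv : v ∈ normalCone P B)
    (hvB : ∀ z ∈ P, z ∉ B → ∀ f ∈ B, ⟪v, z - f⟫ < 0) (huA : u ∈ normalCone P A)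
    (huB : u ∈ intrinsicInterior ℝ (normalCone P B)) : A ⊆ B := by
  intro z hz
  by_contra hzB
  obtain ⟨f, hf⟩ := hB
  obtain ⟨w, hw, a, b, ha, hb, -, rfl⟩ := exists_mem_openSegment_of_mem_intrinsicInterior huB hv
  have hneg : ⟪a • v + b • w, z - f⟫ < 0 := by
    rw [inner_add_left, real_inner_smul_left, real_inner_smul_left]
    nlinarith [hvB z (hAP hz) hzB f hf, hw f hf z (hAP hz)]
  have hnonneg : 0 ≤ ⟪a • v + b • w, z - f⟫ := by
    rw [← neg_sub f z, inner_neg_right, neg_nonneg]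
    exact huA z hz f (hBP hf)
  exact hneg.not_ge hnonneg

theorem IsPolyhedral.eq_of_mem_intrinsicInterior_normalCone {d : ℕ} {P H₁ H₂ : Set (Euc d)}
    (hP : IsPolyhedral P) (hH₁ : IsFaceOf P H₁) (hH₂ : IsFaceOf P H₂) {u : Euc d}
    (hu₁ : u ∈ intrinsicInterior ℝ (normalCone P H₁))
    (hu₂ : u ∈ intrinsicInterior ℝ (normalCone P H₂)) : H₁ = H₂ := by
  obtain ⟨v₁, hv₁, hv₁H⟩ := hP.exists_exposing_normal hH₁
  obtain ⟨v₂, hv₂, hv₂H⟩ := hP.exists_exposing_normal hH₂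
  exact (subset_of_mem_intrinsicInterior_normalCone hH₁.2.2.1 hH₂.2.2.1 hH₂.1 hv₂ hv₂H
    (intrinsicInterior_subset hu₁) hu₂).antisymm
    (subset_of_mem_intrinsicInterior_normalCone hH₂.2.2.1 hH₁.2.2.1 hH₁.1 hv₁ hv₁H
    (intrinsicInterior_subset hu₂) hu₁)

theorem face_intervals_disjoint_general {d : ℕ} (P : Set (Euc d))
    (hP : IsPolyhedral P) (x : Euc d)
    (G₁ H₁ G₂ H₂ : Set (Euc d))
    (hG₁ : IsFaceOf P G₁) (hH₁ : IsFaceOf P H₁)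
    (hx₁ : x ∈ intrinsicInterior ℝ G₁ - intrinsicInterior ℝ (normalCone P H₁))
    (hG₂ : IsFaceOf P G₂) (hH₂ : IsFaceOf P H₂)
    (hx₂ : x ∈ intrinsicInterior ℝ G₂ - intrinsicInterior ℝ (normalCone P H₂))
    (hpair : (G₁, H₁) ≠ (G₂, H₂)) :
    Disjoint {F : Set (Euc d) | IsFaceOf P F ∧ G₁ ⊆ F ∧ F ⊆ H₁}
      {F : Set (Euc d) | IsFaceOf P F ∧ G₂ ⊆ F ∧ F ⊆ H₂} := by
  rw [Set.disjoint_left]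
  rintro F ⟨hF, hG₁F, hFH₁⟩ ⟨-, hG₂F, hFH₂⟩
  obtain ⟨g₁, hg₁, u₁, hu₁, rfl⟩ := hx₁
  obtain ⟨g₂, hg₂, u₂, hu₂, hx⟩ := hx₂
  have hg : g₂ = g₁ := eq_of_sub_eq_sub_of_mem_normalCone hF.2.2.1
    (hG₂F (intrinsicInterior_subset hg₂)) (hG₁F (intrinsicInterior_subset hg₁))
    (normalCone_anti_s7 P hFH₂ (intrinsicInterior_subset hu₂))
    (normalCone_anti_s7 P hFH₁ (intrinsicInterior_subset hu₁)) hx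
  subst hg
  obtain rfl : u₂ = u₁ := sub_right_injective hx
  exact hpair (by rw [hG₁.eq_of_mem_intrinsicInterior hG₂ hg₁ hg₂,
    hP.eq_of_mem_intrinsicInterior_normalCone hH₁ hH₂ hu₁ hu₂])

theorem face_intervals_disjoint {d : ℕ} (P : Set (Euc d))
    (hP : IsPolyhedral P) (hne : P.Nonempty) (x : Euc d)
    (G₁ H₁ G₂ H₂ : Set (Euc d))
    (hG₁ : IsFaceOf P G₁) (hH₁ : IsFaceOf P H₁) (h₁ : G₁ ⊆ H₁) (hne₁ : G₁ ≠ H₁)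
    (hx₁ : x ∈ intrinsicInterior ℝ G₁ - intrinsicInterior ℝ (normalCone P H₁))
    (hG₂ : IsFaceOf P G₂) (hH₂ : IsFaceOf P H₂) (h₂ : G₂ ⊆ H₂) (hne₂ : G₂ ≠ H₂)
    (hx₂ : x ∈ intrinsicInterior ℝ G₂ - intrinsicInterior ℝ (normalCone P H₂))
    (hpair : (G₁, H₁) ≠ (G₂, H₂)) :
    Disjoint {F : Set (Euc d) | IsFaceOf P F ∧ G₁ ⊆ F ∧ F ⊆ H₁}
      {F : Set (Euc d) | IsFaceOf P F ∧ G₂ ⊆ F ∧ F ⊆ H₂} :=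
  face_intervals_disjoint_general P hP x G₁ H₁ G₂ H₂ hG₁ hH₁ hx₁ hG₂ hH₂ hx₂ hpair
end
end

section
/- Let T ⊂ ℝ^d be a polyhedral set, C a face of T, and z ∈ relint C. Then there exists ε > 0 such that for all z_1, z_2 in the closed ball B(z,ε) with z_2 - z_1 lying in the linear subspace parallel to the affine hull of C, one has z_1 ∈ T if and only if z_2 ∈ T. -/
/-!
A constraint `⟪a, x⟫ ≤ b` of `T` that is tight at `z` attains its maximum over `C` at the relative
interior point `z`, so `a` is orthogonal to the direction space of `C`: moving along that space
does not change the value of any tight constraint. The constraints that are strict at `z` stay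
strict on a small ball around `z`, and together this gives the local invariance.
-/

open RealInnerProductSpace Pointwise

noncomputable section

open Filter Topology

section IntrinsicInterior

variable {E : Type*} [NormedAddCommGroup E] [NormedSpace ℝ E] {C : Set E} {z v : E}

theorem eventually_add_smul_mem_of_mem_intrinsicInterior (hz : z ∈ intrinsicInterior ℝ C)
    (hv : v ∈ (affineSpan ℝ C).direction) : ∀ᶠ t : ℝ in 𝓝 0, z + t • v ∈ C := by
  obtain ⟨y, hy, rfl⟩ := hz
  let line : ℝ → affineSpan ℝ C := fun t =>
    ⟨t • v +ᵥ (y : E), AffineSubspace.vadd_mem_of_mem_direction (Submodule.smul_mem _ t hv) y.2⟩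
  have hline : Continuous line := by fun_prop
  have hline0 : line 0 = y := by ext; simp [line]
  filter_upwards [hline.continuousAt.preimage_mem_nhds (hline0 ▸ isOpen_interior.mem_nhds hy)]
    with t ht
  simpa [line, vadd_eq_add, add_comm] using interior_subset ht

theorem map_eq_zero_of_isMaxOn_of_mem_intrinsicInterior (f : E →ₗ[ℝ] ℝ) (hmax : IsMaxOn f C z)
    (hz : z ∈ intrinsicInterior ℝ C) (hv : v ∈ (affineSpan ℝ C).direction) : f v = 0 := by
  have hloc : IsLocalMax (fun t : ℝ => f (z + t • v)) 0 := by
    filter_upwards [eventually_add_smul_mem_of_mem_intrinsicInterior hz hv] with t ht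
    simpa using hmax ht
  have hderiv : HasDerivAt (fun t : ℝ => f (z + t • v)) (f v) 0 := by
    simpa using ((hasDerivAt_id (0 : ℝ)).mul_const (f v)).const_add (f z)
  exact hloc.hasDerivAt_eq_zero hderiv

end IntrinsicInterior

section Polyhedron

variable {E : Type*} [NormedAddCommGroup E] [InnerProductSpace ℝ E] (s : Finset (E × ℝ))

def polyhedron : Set E := {x | ∀ h ∈ s, ⟪h.1, x⟫ ≤ h.2}

theorem eventually_forall_inner_lt (z : E) :
    ∀ᶠ x in 𝓝 z, ∀ h ∈ s, ⟪h.1, z⟫ < h.2 → ⟪h.1, x⟫ < h.2 := by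
  rw [eventually_all_finset]
  intro h _
  rw [eventually_imp_distrib_left]
  exact (continuous_const.inner continuous_id).continuousAt.eventually_lt continuousAt_const

theorem eventually_forall_sub_mem_imp_mem_polyhedron {V : Submodule ℝ E} {z : E}
    (hz : z ∈ polyhedron s) (hV : ∀ h ∈ s, ⟪h.1, z⟫ = h.2 → ∀ v ∈ V, ⟪h.1, v⟫ = 0) :
    ∀ᶠ x₂ in 𝓝 z, ∀ x₁ ∈ polyhedron s, x₂ - x₁ ∈ V → x₂ ∈ polyhedron s := by
  filter_upwards [eventually_forall_inner_lt s z] with x₂ hstrict x₁ hx₁ hsub h hh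
  rcases (hz h hh).lt_or_eq with hlt | heq
  · exact (hstrict h hh hlt).le
  · have hperp := hV h hh heq _ hsub
    rw [inner_sub_right, sub_eq_zero] at hperp
    exact hperp ▸ hx₁ h hh

end Polyhedron

theorem indicator_locally_invariant_along_face {d : ℕ} (T C : Set (Euc d))
    (hT : IsPolyhedral T) (hC : IsFaceOf T C)
    (z : Euc d) (hz : z ∈ intrinsicInterior ℝ C) :
    ∃ ε > (0 : ℝ), ∀ z₁ ∈ Metric.closedBall z ε, ∀ z₂ ∈ Metric.closedBall z ε,
      z₂ - z₁ ∈ (affineSpan ℝ C).direction → (z₁ ∈ T ↔ z₂ ∈ T) := by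
  obtain ⟨s, rfl⟩ := hT
  have hCT : C ⊆ polyhedron s := hC.2.2.1
  have htight : ∀ h ∈ s, ⟪h.1, z⟫ = h.2 → ∀ v ∈ (affineSpan ℝ C).direction, ⟪h.1, v⟫ = 0 :=
    fun h hh heq _ hv => map_eq_zero_of_isMaxOn_of_mem_intrinsicInterior (innerₛₗ ℝ h.1)
      (fun x hx => by simpa [heq] using hCT hx h hh) hz hv
  obtain ⟨ε, hε, hball⟩ := Metric.nhds_basis_closedBall.eventually_iff.mp
    (eventually_forall_sub_mem_imp_mem_polyhedron s (hCT (intrinsicInterior_subset hz)) htight)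
  refine ⟨ε, hε, fun z₁ hz₁ z₂ hz₂ hsub => ⟨fun h₁ => hball hz₂ z₁ h₁ hsub, fun h₂ => ?_⟩⟩
  exact hball hz₁ z₂ h₂ (by rwa [← neg_sub, neg_mem_iff])
end
end

section
/- Let C ⊂ ℝ^d be a closed convex cone containing no line and satisfying C ≠ {0}. Then C ∩ (-C°) ≠ {0}, where C° = {y : ⟨y, c⟩ ≤ 0 for all c ∈ C} is the polar cone; i.e., there exists y ≠ 0 with -y ∈ C and ⟨y, c⟩ ≤ 0 for all c ∈ C. -/
open RealInnerProductSpace Pointwise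

noncomputable section

/-!
Pick `c ≠ 0` in `C`; since `C` is line-free, `-c ∉ C`, so Farkas' lemma gives `x` in the dual
cone `C*` with `⟪x, c⟫ > 0`. Let `p` be the metric projection of `x` onto `C`. Then `x - p` lies
in the polar cone, hence `p = x - (x - p) ∈ C*`, and `p ≠ 0` because `x ∉ C°`. Thus `-p` is the
required vector.
-/

section

variable {E : Type*} [AddCommGroup E] [Module ℝ E]

theorem Convex.add_mem_of_smul_mem {C : Set E} (hconv : Convex ℝ C)
    (hcone : ∀ c ∈ C, ∀ t : ℝ, 0 ≤ t → t • c ∈ C) {a b : E} (ha : a ∈ C) (hb : b ∈ C) :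
    a + b ∈ C := by
  have hmid : (2 : ℝ)⁻¹ • a + (2 : ℝ)⁻¹ • b ∈ C :=
    hconv ha hb (by norm_num) (by norm_num) (by norm_num)
  simpa [smul_add, smul_smul] using hcone _ hmid 2 zero_le_two

variable [TopologicalSpace E]

def ProperCone.ofIsClosedConvex (C : Set E) (hcl : IsClosed C) (hconv : Convex ℝ C)
    (hcone : ∀ c ∈ C, ∀ t : ℝ, 0 ≤ t → t • c ∈ C) (h0 : (0 : E) ∈ C) : ProperCone ℝ E where
  carrier := C
  add_mem' := hconv.add_mem_of_smul_mem hcone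
  zero_mem' := h0
  smul_mem' t _ hc := hcone _ hc t t.2
  isClosed' := hcl

end

namespace ProperCone

variable {E : Type*} [NormedAddCommGroup E] [InnerProductSpace ℝ E] [CompleteSpace E]

theorem exists_mem_sub_mem_polar (K : ProperCone ℝ E) (x : E) :
    ∃ p ∈ K, ∀ w ∈ K, ⟪x - p, w⟫ ≤ 0 := by
  obtain ⟨p, hpK, hp⟩ :=
    exists_norm_eq_iInf_of_complete_convex K.nonempty K.isClosed.isComplete K.convex x
  refine ⟨p, hpK, fun w hw => ?_⟩
  simpa using (norm_eq_iInf_iff_real_inner_le_zero K.convex hpK).1 hp (w + p) (K.add_mem hw hpK)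

theorem exists_ne_zero_mem_innerDual_of_neg_notMem (K : ProperCone ℝ E) {c : E} (hc : c ∈ K)
    (hnc : -c ∉ K) : ∃ p ∈ K, p ≠ 0 ∧ p ∈ innerDual (K : Set E) := by
  obtain ⟨x, hxdual, hxc⟩ := K.hyperplane_separation' hnc
  rw [inner_neg_left, neg_lt_zero] at hxc
  obtain ⟨p, hpK, hpolar⟩ := K.exists_mem_sub_mem_polar x
  refine ⟨p, hpK, ?_, mem_innerDual.2 fun w hw => ?_⟩
  · rintro rfl
    have hxc' := hpolar c hc
    rw [sub_zero, real_inner_comm] at hxc'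
    linarith
  · have hxw := hxdual w hw
    have hpw := hpolar w hw
    rw [inner_sub_left, real_inner_comm w x] at hpw
    rw [real_inner_comm]
    linarith

end ProperCone

theorem cone_meets_neg_polar {d : ℕ} (C : Set (Euc d))
    (hcl : IsClosed C) (hconv : Convex ℝ C)
    (hcone : ∀ c ∈ C, ∀ t : ℝ, 0 ≤ t → t • c ∈ C)
    (h0 : (0 : Euc d) ∈ C)
    (hlf : C ∩ (-C) ⊆ {0}) (hne : C ≠ {0}) :
    ∃ y : Euc d, y ≠ 0 ∧ -y ∈ C ∧ ∀ c ∈ C, ⟪y, c⟫ ≤ 0 := by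
  obtain ⟨c, hcC, hc0⟩ : ∃ c ∈ C, c ≠ 0 := by
    contrapose! hne
    exact Set.eq_singleton_iff_unique_mem.2 ⟨h0, hne⟩
  have hnc : -c ∉ C := fun h => hc0 (hlf ⟨hcC, by simpa using h⟩)
  obtain ⟨p, hpC, hp0, hpdual⟩ :=
    (ProperCone.ofIsClosedConvex C hcl hconv hcone h0).exists_ne_zero_mem_innerDual_of_neg_notMem
      hcC hnc
  refine ⟨-p, neg_ne_zero.2 hp0, by rwa [neg_neg], fun c' hc' => ?_⟩
  rw [inner_neg_left, real_inner_comm, neg_nonpos]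
  exact ProperCone.mem_innerDual.1 hpdual hc'
end
end

section
/- Let P be a nonempty bounded polyhedral set in ℝ^d, p a vertex of P, and u in the interior of N(P,{p}). Then there exists λ_0 > 0 such that for all λ > λ_0, the point p - λu lies in p - N(P,{p}) but lies in no set F - N(P,F) for any face F ≠ {p}; consequently Σ_{F face} (-1)^{dim F} 1_{F - N(P,F)}(p - λu) = 1. -/
/-! An interior normal direction `u` at the vertex `p` satisfies `⟪u, z - p⟫ ≤ -c ‖z - p‖` on `P`
for some `c > 0`. If `p - λu = f - w` with `f ∈ F` and `w ∈ N(P,F)`, testing `w` against `p` gives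
`λ c ‖f - p‖ ≤ ‖f - p‖²`, so `f = p` once `λ c` exceeds the radius of `P` around `p`; then
`w = λu`, and testing it against the other points of `F` forces `F = {p}`. Hence only the face
`{p}`, of dimension `0`, contributes to `φ_P(p - λu)`. -/

open RealInnerProductSpace Pointwise

noncomputable section

section NormalCone

variable {d : ℕ} {P F : Set (Euc d)} {p u : Euc d}

lemma smul_mem_normalCone {w : Euc d} (hw : w ∈ normalCone P F) {t : ℝ} (ht : 0 ≤ t) :
    t • w ∈ normalCone P F := fun f hf z hz => by
  rw [real_inner_smul_left]
  exact mul_nonpos_of_nonneg_of_nonpos ht (hw f hf z hz)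

lemma exists_inner_sub_le_neg_mul_norm_of_mem_interior_normalCone
    (hu : u ∈ interior (normalCone P {p})) :
    ∃ c > (0 : ℝ), ∀ z ∈ P, ⟪u, z - p⟫ ≤ -(c * ‖z - p‖) := by
  obtain ⟨δ, hδ, hball⟩ := Metric.isOpen_iff.1 isOpen_interior u hu
  refine ⟨δ / 2, half_pos hδ, fun z hz => ?_⟩
  rcases eq_or_ne z p with rfl | hzp
  · simp
  have hn : 0 < ‖z - p‖ := norm_pos_iff.2 (sub_ne_zero.2 hzp)
  have hmem : u + (δ / 2 / ‖z - p‖) • (z - p) ∈ normalCone P {p} := by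
    refine interior_subset (hball ?_)
    rw [Metric.mem_ball, dist_eq_norm, add_sub_cancel_left, norm_smul, Real.norm_eq_abs,
      abs_of_pos (by positivity), div_mul_cancel₀ _ hn.ne']
    linarith
  have h := hmem p rfl z hz
  rw [inner_add_left, real_inner_smul_left, real_inner_self_eq_norm_sq] at h
  have hsq : δ / 2 / ‖z - p‖ * ‖z - p‖ ^ 2 = δ / 2 * ‖z - p‖ := by field_simp
  linarith

variable {c lam : ℝ} (hkey : ∀ z ∈ P, ⟪u, z - p⟫ ≤ -(c * ‖z - p‖))
include hkey

lemma mul_norm_sub_le_sq_of_sub_eq_sub_smul (hp : p ∈ P) (hFP : F ⊆ P) (hlam : 0 ≤ lam)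
    {f w : Euc d} (hf : f ∈ F) (hw : w ∈ normalCone P F) (hfw : f - w = p - lam • u) :
    lam * c * ‖f - p‖ ≤ ‖f - p‖ ^ 2 := by
  have hw' : w = (f - p) + lam • u := by rw [← sub_sub_self f w, hfw]; abel
  have h := hw f hf p hp
  rw [hw', inner_add_left, real_inner_smul_left, ← neg_sub f p, inner_neg_right,
    inner_neg_right, real_inner_self_eq_norm_sq] at h
  nlinarith [mul_le_mul_of_nonneg_left (hkey f (hFP hf)) hlam]

lemma eq_singleton_of_sub_smul_mem_sub_normalCone (hc : 0 < c) (hp : p ∈ P) (hFP : F ⊆ P)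
    {R : ℝ} (hR : P ⊆ Metric.closedBall p R) (hlam : R < lam * c)
    (h : p - lam • u ∈ F - normalCone P F) : F = {p} := by
  obtain ⟨f, hf, w, hw, hfw⟩ := h
  have hR0 : 0 ≤ R := by simpa using hR hp
  have hlam0 : 0 < lam := pos_of_mul_pos_left (hR0.trans_lt hlam) hc.le
  have hfp : f = p := by
    have hle := mul_norm_sub_le_sq_of_sub_eq_sub_smul hkey hp hFP hlam0.le hf hw hfw
    have hfR : ‖f - p‖ ≤ R := by simpa [dist_eq_norm] using hR (hFP hf)
    rw [← sub_eq_zero, ← norm_eq_zero]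
    nlinarith [norm_nonneg (f - p)]
  have hwu : w = lam • u := by rw [hfp] at hfw; exact sub_right_inj.1 hfw
  refine Set.eq_singleton_iff_unique_mem.2 ⟨hfp ▸ hf, fun q hq => ?_⟩
  have hnc := hw q hq p hp
  rw [hwu, real_inner_smul_left, ← neg_sub q p, inner_neg_right] at hnc
  have hqp : lam * (c * ‖q - p‖) ≤ 0 := by
    nlinarith [mul_le_mul_of_nonneg_left (hkey q (hFP hq)) hlam0.le]
  exact sub_eq_zero.1 <| norm_le_zero_iff.1 <|
    nonpos_of_mul_nonpos_right (nonpos_of_mul_nonpos_right hqp hlam0) hc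

end NormalCone

lemma sdim_singleton {d : ℕ} (p : Euc d) : sdim ({p} : Set (Euc d)) = 0 := by
  rw [sdim, direction_affineSpan, vectorSpan_singleton, finrank_bot]

lemma phi_eq_one_of_mem_only_vertex_cell {d : ℕ} {P : Set (Euc d)} {p x : Euc d}
    (hv : IsFaceOf P {p}) (hx : x ∈ ({p} : Set (Euc d)) - normalCone P {p})
    (hF : ∀ F, IsFaceOf P F → F ≠ {p} → x ∉ F - normalCone P F) :
    phi P x = 1 := by
  classical
  rw [phi, finsum_mem_inter_support_eq' _ _ {{p}}, finsum_mem_singleton, sdim_singleton,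
    Set.indicator_of_mem hx, pow_zero, one_mul]
  intro F hsupp
  have hxF : x ∈ F - normalCone P F := by
    by_contra hxF
    exact hsupp (by simp only [Set.indicator_of_notMem hxF, mul_zero])
  exact ⟨fun hF' => by_contra fun hne => hF F hF' hne hxF,
    fun h => (Set.mem_singleton_iff.1 h) ▸ hv⟩

theorem phi_at_point_beyond_vertex_general {d : ℕ} (P : Set (Euc d))
    (hb : Bornology.IsBounded P)
    (p u : Euc d) (hv : IsFaceOf P {p})
    (hu : u ∈ interior (normalCone P {p})) :
    ∃ lam₀ > (0 : ℝ), ∀ lam > lam₀,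
      (p - lam • u ∈ ({p} : Set (Euc d)) - normalCone P {p}) ∧
      (∀ F : Set (Euc d), IsFaceOf P F → F ≠ {p} →
        p - lam • u ∉ F - normalCone P F) ∧
      phi P (p - lam • u) = 1 := by
  obtain ⟨c, hc, hkey⟩ := exists_inner_sub_le_neg_mul_norm_of_mem_interior_normalCone hu
  obtain ⟨R, hR0, hR⟩ := hb.subset_closedBall_lt 0 p
  refine ⟨R / c, div_pos hR0 hc, fun lam hlam => ?_⟩
  have hlamc : R < lam * c := (div_lt_iff₀ hc).1 hlam
  have hvertex : p - lam • u ∈ ({p} : Set (Euc d)) - normalCone P {p} :=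
    ⟨p, rfl, lam • u, smul_mem_normalCone (interior_subset hu)
      ((div_pos hR0 hc).trans hlam).le, rfl⟩
  have hothers : ∀ F : Set (Euc d), IsFaceOf P F → F ≠ {p} → p - lam • u ∉ F - normalCone P F :=
    fun F hF hne hmem => hne <| eq_singleton_of_sub_smul_mem_sub_normalCone hkey hc
      (hv.2.2.subset rfl) hF.2.2.subset hR hlamc hmem
  exact ⟨hvertex, hothers, phi_eq_one_of_mem_only_vertex_cell hv hvertex hothers⟩

theorem phi_at_point_beyond_vertex {d : ℕ} (P : Set (Euc d))
    (hP : IsPolyhedral P) (hb : Bornology.IsBounded P) (hne : P.Nonempty)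
    (p u : Euc d) (hv : IsFaceOf P {p})
    (hu : u ∈ interior (normalCone P {p})) :
    ∃ lam₀ > (0 : ℝ), ∀ lam > lam₀,
      (p - lam • u ∈ ({p} : Set (Euc d)) - normalCone P {p}) ∧
      (∀ F : Set (Euc d), IsFaceOf P F → F ≠ {p} →
        p - lam • u ∉ F - normalCone P F) ∧
      phi P (p - lam • u) = 1 :=
  phi_at_point_beyond_vertex_general P hb p u hv hu
end
end

section
/- Let P = conv{a_1,…,a_k} + pos{b_1,…,b_m} be an unbounded line-free polyhedral set in ℝ^d, let C = pos{b_1,…,b_m}, and let y ∈ C° \ {0} with -y ∈ C. Assume ⟨a_1, y⟩ = max_i ⟨a_i, y⟩. Then the point a_1 + y does not belong to F - N(P,F) for any nonempty face F of P. -/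
open RealInnerProductSpace Pointwise

noncomputable section

/-
If `a 0 + y = f - u` with `f ∈ F` and `u ∈ N(P,F)`, then since `-y` is a recession direction of
`P` the point `f - y` lies in `P`, so `⟪u, y⟫ ≥ 0`, i.e. `⟪f - a 0, y⟫ ≥ ‖y‖²`. But `⟪·, y⟫` is
maximised over `P` at `a 0`: over the hull part by the choice of `a 0`, over the cone part
because `y ∈ C°`. Hence `‖y‖² ≤ 0`, contradicting `y ≠ 0`.
-/

theorem add_mem_setOf_nonneg_sum_smul {E ι : Type*} [AddCommGroup E] [Module ℝ E] [Fintype ι]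
    (b : ι → E) {x z : E}
    (hx : x ∈ {x | ∃ c : ι → ℝ, (∀ i, 0 ≤ c i) ∧ x = ∑ i, c i • b i})
    (hz : z ∈ {x | ∃ c : ι → ℝ, (∀ i, 0 ≤ c i) ∧ x = ∑ i, c i • b i}) :
    x + z ∈ {x | ∃ c : ι → ℝ, (∀ i, 0 ≤ c i) ∧ x = ∑ i, c i • b i} := by
  obtain ⟨c, hc, rfl⟩ := hx
  obtain ⟨c', hc', rfl⟩ := hz
  exact ⟨c + c', fun i => add_nonneg (hc i) (hc' i), by
    simp only [Pi.add_apply, add_smul, Finset.sum_add_distrib]⟩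

theorem add_mem_add_of_mem_of_add_closed {E : Type*} [AddCommGroup E] {S C : Set E} {f v : E}
    (hf : f ∈ S + C) (hC : ∀ c ∈ C, c + v ∈ C) : f + v ∈ S + C := by
  obtain ⟨s, hs, c, hc, rfl⟩ := hf
  exact ⟨s, hs, c + v, hC c hc, (add_assoc s c v).symm⟩

theorem inner_le_of_mem_convexHull_add {E : Type*} [NormedAddCommGroup E] [InnerProductSpace ℝ E]
    {s C : Set E} {y : E} {M : ℝ} (hs : ∀ x ∈ s, ⟪x, y⟫ ≤ M) (hC : ∀ c ∈ C, ⟪y, c⟫ ≤ 0) :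
    ∀ x ∈ convexHull ℝ s + C, ⟪x, y⟫ ≤ M := by
  rintro _ ⟨p, hp, c, hc, rfl⟩
  have hp' : ⟪p, y⟫ ≤ M :=
    convexHull_min hs (convex_halfSpace_le
      ⟨fun x z => inner_add_left x z y, fun r x => real_inner_smul_left x y r⟩ M) hp
  rw [inner_add_left, real_inner_comm y c]
  linarith [hC c hc]

theorem add_notMem_sub_normalCone {d : ℕ} {P F : Set (Euc d)} (hFP : F ⊆ P) {x y : Euc d}
    (hy : y ≠ 0) (hrec : ∀ f ∈ F, f - y ∈ P) (hmax : ∀ z ∈ P, ⟪z, y⟫ ≤ ⟪x, y⟫) :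
    x + y ∉ F - normalCone P F := by
  rintro ⟨f, hf, u, hu, hfu⟩
  have hu_y : 0 ≤ ⟪u, y⟫ := by
    have := hu f hf (f - y) (hrec f hf)
    rwa [sub_sub_cancel_left, inner_neg_right, neg_nonpos] at this
  have hu_eq : u = f - x - y := by rw [sub_sub, ← hfu, sub_sub_cancel]
  have hyy : 0 < ⟪y, y⟫ := real_inner_self_pos.mpr hy
  rw [hu_eq, inner_sub_left, inner_sub_left] at hu_y
  linarith [hmax f (hFP hf)]

theorem point_beyond_unbounded_polyhedron_general {d k m : ℕ}
    (a : Fin (k + 1) → Euc d) (b : Fin m → Euc d)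
    (C P : Set (Euc d))
    (hC : C = {x | ∃ c : Fin m → ℝ, (∀ i, 0 ≤ c i) ∧ x = ∑ i, c i • b i})
    (hP : P = convexHull ℝ (Set.range a) + C)
    (y : Euc d) (hy : y ≠ 0) (hyC : -y ∈ C)
    (hpol : ∀ c ∈ C, ⟪y, c⟫ ≤ 0)
    (hmax : ∀ i, ⟪a i, y⟫ ≤ ⟪a 0, y⟫) :
    ∀ F : Set (Euc d), IsFaceOf P F → a 0 + y ∉ F - normalCone P F := by
  intro F hF
  subst hC hP
  have hFP := hF.2.2.1
  refine add_notMem_sub_normalCone hFP hy (fun f hf => ?_) ?_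
  · rw [sub_eq_add_neg]
    exact add_mem_add_of_mem_of_add_closed (hFP hf) fun c hc =>
      add_mem_setOf_nonneg_sum_smul b hc hyC
  · exact inner_le_of_mem_convexHull_add (Set.forall_mem_range.mpr hmax) hpol

theorem point_beyond_unbounded_polyhedron {d k m : ℕ}
    (a : Fin (k + 1) → Euc d) (b : Fin m → Euc d) (hb : ∀ i, b i ≠ 0)
    (C P : Set (Euc d))
    (hC : C = {x | ∃ c : Fin m → ℝ, (∀ i, 0 ≤ c i) ∧ x = ∑ i, c i • b i})
    (hP : P = convexHull ℝ (Set.range a) + C)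
    (hub : ¬ Bornology.IsBounded P) (hlf : LineFree P)
    (y : Euc d) (hy : y ≠ 0) (hyC : -y ∈ C)
    (hpol : ∀ c ∈ C, ⟪y, c⟫ ≤ 0)
    (hmax : ∀ i, ⟪a i, y⟫ ≤ ⟪a 0, y⟫) :
    ∀ F : Set (Euc d), IsFaceOf P F → a 0 + y ∉ F - normalCone P F :=
  point_beyond_unbounded_polyhedron_general a b C P hC hP y hy hyC hpol hmax
end
end
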